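/- arXiv:1307.2599 — 4 statements merged into one kernel-verified Lean document; each statement's English description precedes it below -/
import Mathlib

section
/- Let x, y ∈ [0,1] with x + y ≤ 1. Define à(x,y) := 2 − x − y − sqrt(4(1 − x − y) + (x − y)²). Then 0 ≤ (1/2)·Ã(x,y) ≤ min(x, y). -/
/-! With `D = 4(1 - x - y) + (x - y)²`, the two identities
`D = (2 - x - y)² - 4xy` and `D = (2 - 3x - y)² + 8x(1 - x - y)` give
`2 - 3x - y ≤ √D ≤ 2 - x - y`, i.e. `0 ≤ Ã(x, y)/2 ≤ x`; the bound by `y` follows by symmetry. -/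

open Real

theorem sqrt_discr_le_two_sub {x y : ℝ} (hx : 0 ≤ x) (hy : 0 ≤ y) (hxy : x + y ≤ 2) :
    √(4 * (1 - x - y) + (x - y) ^ 2) ≤ 2 - x - y := by
  have hD : 4 * (1 - x - y) + (x - y) ^ 2 = (2 - x - y) ^ 2 - 4 * x * y := by ring
  rw [sqrt_le_left (by linarith), hD]
  nlinarith [mul_nonneg hx hy]

theorem two_sub_three_mul_sub_le_sqrt_discr {x y : ℝ} (hx : 0 ≤ x) (hxy : x + y ≤ 1) :
    2 - 3 * x - y ≤ √(4 * (1 - x - y) + (x - y) ^ 2) := by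
  have hD : 4 * (1 - x - y) + (x - y) ^ 2 = (2 - 3 * x - y) ^ 2 + 8 * x * (1 - x - y) := by ring
  apply le_sqrt_of_sq_le
  rw [hD]
  nlinarith [mul_nonneg hx (sub_nonneg.2 hxy)]

theorem stmt0 (x y : ℝ) (hx : x ∈ Set.Icc (0:ℝ) 1) (hy : y ∈ Set.Icc (0:ℝ) 1)
    (hxy : x + y ≤ 1) :
    0 ≤ (1/2) * (2 - x - y - Real.sqrt (4*(1 - x - y) + (x - y)^2)) ∧
    (1/2) * (2 - x - y - Real.sqrt (4*(1 - x - y) + (x - y)^2)) ≤ min x y := by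
  have hupper := sqrt_discr_le_two_sub hx.1 hy.1 (by linarith)
  have hlower_x := two_sub_three_mul_sub_le_sqrt_discr (y := y) hx.1 hxy
  have hlower_y := two_sub_three_mul_sub_le_sqrt_discr (y := x) hy.1 (by linarith)
  have hswap : 4 * (1 - y - x) + (y - x) ^ 2 = 4 * (1 - x - y) + (x - y) ^ 2 := by ring
  rw [hswap] at hlower_y
  refine ⟨by linarith, le_min ?_ ?_⟩ <;> linarith
end

section
/- Let a, bᵖ, bⁿ ∈ ℓ₂(ℤ) be such that {a; bᵖ, bⁿ} is a tight framelet filter bank (i.e., |â(ξ)|² + |b̂ᵖ(ξ)|² + |b̂ⁿ(ξ)|² = 1 and â(ξ)conj(â(ξ+π)) + b̂ᵖ(ξ)conj(b̂ᵖ(ξ+π)) + b̂ⁿ(ξ)conj(b̂ⁿ(ξ+π)) = 0 for a.e. ξ). Then |b̂ᵖ(ξ+π)|² + |b̂ⁿ(ξ)|² ≥ A(ξ) for a.e. ξ ∈ [0,π], where A(ξ) := (2 − |â(ξ)|² − |â(ξ+π)|² − sqrt(4(1 − |â(ξ)|² − |â(ξ+π)|²) + (|â(ξ)|² − |â(ξ+π)|²)²))/2.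 -/
/-!
Orthogonality `a ā' + p p̄' + n n̄' = 0` and the triangle inequality give
`|a| |a'| ≤ |p| |p'| + |n| |n'|`, and Cauchy–Schwarz with the pairing `(|p|, |n'|)`, `(|p'|, |n|)`
turns this into `A B ≤ (|p|² + |n'|²) (|p'|² + |n|²)` with `A = |a|²`, `B = |a'|²`.
By the two normalisations the two factors sum to `2 - A - B`, so `x = |p'|² + |n|²` satisfies
`x (2 - A - B - x) ≥ A B` and hence lies above the smaller root of `X² - (2 - A - B) X + A B`,
which is the stated bound.
-/

open MeasureTheory Real

lemma sub_sqrt_sq_sub_div_two_le_of_le_mul_sub {c d x : ℝ} (h : d ≤ x * (c - x)) :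
    (c - √(c ^ 2 - 4 * d)) / 2 ≤ x := by
  have hsq : (c - 2 * x) ^ 2 ≤ c ^ 2 - 4 * d := by nlinarith
  have hroot : c - 2 * x ≤ √(c ^ 2 - 4 * d) :=
    calc c - 2 * x ≤ |c - 2 * x| := le_abs_self _
      _ = √((c - 2 * x) ^ 2) := (sqrt_sq_eq_abs _).symm
      _ ≤ √(c ^ 2 - 4 * d) := sqrt_le_sqrt hsq
  linarith

lemma sq_le_mul_of_le_add_mul {t p q P Q : ℝ} (ht : 0 ≤ t) (h : t ≤ p * P + q * Q) :
    t ^ 2 ≤ (p ^ 2 + Q ^ 2) * (P ^ 2 + q ^ 2) :=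
  calc t ^ 2 ≤ (p * P + q * Q) ^ 2 := pow_le_pow_left₀ ht h 2
    _ ≤ (p ^ 2 + Q ^ 2) * (P ^ 2 + q ^ 2) := by nlinarith [sq_nonneg (p * q - P * Q)]

lemma norm_mul_norm_le_of_mul_star_add_eq_zero {𝕜 : Type*} [RCLike 𝕜] {a a' p p' n n' : 𝕜}
    (h : a * star a' + p * star p' + n * star n' = 0) :
    ‖a‖ * ‖a'‖ ≤ ‖p‖ * ‖p'‖ + ‖n‖ * ‖n'‖ := by
  have hb : p * star p' + n * star n' = -(a * star a') := by linear_combination h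
  calc ‖a‖ * ‖a'‖ = ‖p * star p' + n * star n'‖ := by
        rw [hb, norm_neg, norm_mul, norm_star]
    _ ≤ ‖p * star p'‖ + ‖n * star n'‖ := norm_add_le _ _
    _ = ‖p‖ * ‖p'‖ + ‖n‖ * ‖n'‖ := by rw [norm_mul, norm_mul, norm_star, norm_star]

lemma tight_frame_lower_bound {𝕜 : Type*} [RCLike 𝕜] {a a' p p' n n' : 𝕜}
    (hnorm : ‖a‖ ^ 2 + ‖p‖ ^ 2 + ‖n‖ ^ 2 = 1) (hnorm' : ‖a'‖ ^ 2 + ‖p'‖ ^ 2 + ‖n'‖ ^ 2 = 1)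
    (horth : a * star a' + p * star p' + n * star n' = 0) :
    (2 - ‖a‖ ^ 2 - ‖a'‖ ^ 2 -
        √(4 * (1 - ‖a‖ ^ 2 - ‖a'‖ ^ 2) + (‖a‖ ^ 2 - ‖a'‖ ^ 2) ^ 2)) / 2 ≤
      ‖p'‖ ^ 2 + ‖n‖ ^ 2 := by
  have hcs : (‖a‖ * ‖a'‖) ^ 2 ≤ (‖p‖ ^ 2 + ‖n'‖ ^ 2) * (‖p'‖ ^ 2 + ‖n‖ ^ 2) :=
    sq_le_mul_of_le_add_mul (by positivity) (norm_mul_norm_le_of_mul_star_add_eq_zero horth)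
  have hdisc : 4 * (1 - ‖a‖ ^ 2 - ‖a'‖ ^ 2) + (‖a‖ ^ 2 - ‖a'‖ ^ 2) ^ 2 =
      (2 - ‖a‖ ^ 2 - ‖a'‖ ^ 2) ^ 2 - 4 * (‖a‖ * ‖a'‖) ^ 2 := by ring
  have hsum : 2 - ‖a‖ ^ 2 - ‖a'‖ ^ 2 - (‖p'‖ ^ 2 + ‖n‖ ^ 2) = ‖p‖ ^ 2 + ‖n'‖ ^ 2 := by linarith
  rw [hdisc]
  apply sub_sqrt_sq_sub_div_two_le_of_le_mul_sub
  rw [hsum]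
  linarith

theorem stmt7 (a bp bn : ℝ → ℂ)
    (h1 : ∀ᵐ ξ : ℝ, ‖a ξ‖^2 + ‖bp ξ‖^2 + ‖bn ξ‖^2 = 1)
    (h2 : ∀ᵐ ξ : ℝ,
      a ξ * star (a (ξ + π)) + bp ξ * star (bp (ξ + π)) + bn ξ * star (bn (ξ + π)) = 0) :
    ∀ᵐ ξ ∂(volume.restrict (Set.Icc (0:ℝ) π)),
      ‖bp (ξ + π)‖^2 + ‖bn ξ‖^2 ≥
        (2 - ‖a ξ‖^2 - ‖a (ξ + π)‖^2 -
          Real.sqrt (4*(1 - ‖a ξ‖^2 - ‖a (ξ + π)‖^2) + (‖a ξ‖^2 - ‖a (ξ + π)‖^2)^2)) / 2 := by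
  have h1_shift : ∀ᵐ ξ : ℝ, ‖a (ξ + π)‖^2 + ‖bp (ξ + π)‖^2 + ‖bn (ξ + π)‖^2 = 1 :=
    (measurePreserving_add_right volume π).quasiMeasurePreserving.ae h1
  refine ae_restrict_of_ae ?_
  filter_upwards [h1, h1_shift, h2] with ξ hnorm hnorm' horth
  exact tight_frame_lower_bound hnorm hnorm' horth
end

section
/- Let Q and V be 2×2 matrices of Laurent polynomials over ℂ such that V(z)Q(z) is a diagonal matrix diag(c(z), d(z)) with c = 1 (the constant 1). Then there exist Laurent polynomials u₁, u₂, u₃, u₄, v₂, v₄ with u₁u₄ + u₂u₃ = 1, d = v₂v₄, and V(z) = diag(1, v₂(z))·[[u₁(z), −u₃(z)],[u₂(z), u₄(z)]], Q(z) = [[u₄(z), u₃(z)],[−u₂(z), u₁(z)]]·diag(1, v₄(z)). -/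
noncomputable section
open LaurentPolynomial Matrix

/-- The adjoint (star) of a Laurent polynomial: (Σ u(k)zᵏ)⋆ = Σ conj(u(k)) z⁻ᵏ. -/
def lstar (p : LaurentPolynomial ℂ) : LaurentPolynomial ℂ :=
  p.coeff.sum fun k c => LaurentPolynomial.C (starRingEnd ℂ c) * LaurentPolynomial.T (-k)

/-- Evaluation of a Laurent polynomial at a nonzero complex number. -/
def leval (z : ℂ) (p : LaurentPolynomial ℂ) : ℂ :=
  p.coeff.sum fun k c => c * z ^ k

/-- Substitution z ↦ -z in a Laurent polynomial. -/
def nsub (p : LaurentPolynomial ℂ) : LaurentPolynomial ℂ :=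
  p.coeff.sum fun k c => LaurentPolynomial.C (c * (-1 : ℂ) ^ k) * LaurentPolynomial.T k

/-- Substitution z ↦ z² in a Laurent polynomial. -/
def ssub (p : LaurentPolynomial ℂ) : LaurentPolynomial ℂ :=
  p.coeff.sum fun k c => LaurentPolynomial.C c * LaurentPolynomial.T (2 * k)

/-- Entrywise evaluation of a matrix of Laurent polynomials. -/
def meval {m n : ℕ} (z : ℂ) (M : Matrix (Fin m) (Fin n) (LaurentPolynomial ℂ)) :
    Matrix (Fin m) (Fin n) ℂ :=
  M.map (leval z)

/-- Star-adjoint transpose of a matrix of Laurent polynomials. -/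
def mstar {m n : ℕ} (M : Matrix (Fin m) (Fin n) (LaurentPolynomial ℂ)) :
    Matrix (Fin n) (Fin m) (LaurentPolynomial ℂ) :=
  (M.map lstar)ᵀ

/-- The γ-coset of a Laurent polynomial: coefficient of zᵏ is the coefficient of z^{γ+2k}. -/
def coset (γ : ℤ) (p : LaurentPolynomial ℂ) : LaurentPolynomial ℂ :=
  p.coeff.sum fun k c => if (k - γ) % 2 = 0 then LaurentPolynomial.C c * LaurentPolynomial.T ((k - γ) / 2) else 0

/-! If `V x = e₀`, the second row of `V` is orthogonal to `x`, hence a multiple of `(-x₁, x₀)`, and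
pairing with the first row shows the multiplier is `det V` (Cramer's rule). Reading `V Q = diag(1, d)`
column- and row-wise gives this for `V` with `x` the first column of `Q`, and dually for `Q` with
the first row of `V`; finally `d = det V · det Q`. -/

namespace Matrix

variable {R : Type*} [CommRing R]

theorem eq_diagonal_det_mul_of_mulVec_eq_single (V : Matrix (Fin 2) (Fin 2) R) (x : Fin 2 → R)
    (hx : V *ᵥ x = Pi.single 0 1) :
    V = diagonal ![1, V.det] * !![V 0 0, V 0 1; -x 1, x 0] := by
  have h₀ : V 0 0 * x 0 + V 0 1 * x 1 = 1 := by
    simpa [mulVec, dotProduct, Fin.sum_univ_two] using congrFun hx 0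
  have h₁ : V 1 0 * x 0 + V 1 1 * x 1 = 0 := by
    simpa [mulVec, dotProduct, Fin.sum_univ_two] using congrFun hx 1
  ext i j
  fin_cases i <;> fin_cases j <;>
    simp only [Fin.zero_eta, Fin.mk_one, Fin.isValue, det_fin_two, diagonal_mul, of_apply, cons_val',
      cons_val_zero, cons_val_one, cons_val_fin_one, one_mul, mul_neg]
  · linear_combination V 0 0 * h₁ - V 1 0 * h₀
  · linear_combination V 0 1 * h₁ - V 1 1 * h₀

theorem eq_mul_diagonal_det_of_vecMul_eq_single (Q : Matrix (Fin 2) (Fin 2) R) (y : Fin 2 → R)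
    (hy : y ᵥ* Q = Pi.single 0 1) :
    Q = !![Q 0 0, -y 1; Q 1 0, y 0] * diagonal ![1, Q.det] := by
  have h := eq_diagonal_det_mul_of_mulVec_eq_single Qᵀ y (by rwa [mulVec_transpose])
  rw [det_transpose] at h
  calc Q = Qᵀᵀ := rfl
    _ = _ := by
      rw [h, transpose_mul, diagonal_transpose]
      congr 1
      ext i j
      fin_cases i <;> fin_cases j <;> rfl

end Matrix

theorem stmt12 (V Q : Matrix (Fin 2) (Fin 2) (LaurentPolynomial ℂ))
    (d : LaurentPolynomial ℂ)
    (h : V * Q = Matrix.diagonal ![1, d]) :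
    ∃ u₁ u₂ u₃ u₄ v₂ v₄ : LaurentPolynomial ℂ,
      u₁ * u₄ + u₂ * u₃ = 1 ∧ d = v₂ * v₄ ∧
      V = Matrix.diagonal ![1, v₂] * !![u₁, -u₃; u₂, u₄] ∧
      Q = !![u₄, u₃; -u₂, u₁] * Matrix.diagonal ![1, v₄] := by
  have hcol : V *ᵥ Q.col 0 = Pi.single 0 1 := by
    rw [← mulVec_single_one, mulVec_mulVec, h, diagonal_mulVec_single]
    simp
  have hrow : V.row 0 ᵥ* Q = Pi.single 0 1 := by
    rw [← single_one_vecMul, vecMul_vecMul, h, single_vecMul_diagonal]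
    simp
  refine ⟨V 0 0, -Q 1 0, -V 0 1, Q 0 0, V.det, Q.det, ?_, ?_, ?_, ?_⟩
  · simpa [mulVec, dotProduct, Fin.sum_univ_two, mul_comm] using congrFun hcol 0
  · simpa [Fin.prod_univ_two] using congrArg det h.symm
  · simpa using eq_diagonal_det_mul_of_mulVec_eq_single V _ hcol
  · simpa using eq_mul_diagonal_det_of_vecMul_eq_single Q _ hrow
end
end

section
/- Let P(z) = [[p₁(z), p₃(z)],[p₂(z), p₄(z)]] be a 2×2 matrix of Laurent polynomials over ℂ. Define the star operation by (Σ u(k)z^k)* := Σ conj(u(k)) z^{−k}. Then P(z)P*(z) = I₂ for all z ∈ ℂ∖{0} if and only if there exist λ ∈ ℂ with |λ| = 1 and k ∈ ℤ such that p₃(z) = −λ z^k p₂*(z), p₄(z) = λ z^k p₁*(z), and p₁(z)p₁*(z) + p₂(z)p₂*(z) = 1 for all z ∈ ℂ∖{0}. -/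
noncomputable section
open LaurentPolynomial Matrix

/-!
Evaluation on `ℂ ∖ {0}` is injective on Laurent polynomials, so paraunitarity of `P` is the
identity `P * P⋆ = 1` in `ℂ[z, z⁻¹]`, on which `⋆` is a ring involution `σ`. Over any commutative
ring with an involution, `P * P⋆ = 1` also gives `P⋆ * P = 1`, and comparing `P⋆ = P⁻¹` with the
adjugate of `P` gives the stated shape of `P` with `u = det P` and `u * σ u = 1`. The units of
`ℂ[z, z⁻¹]` are the monomials `c zᵏ`, and `c zᵏ` times its adjoint is `|c|²`, so `|c| = 1`.
-/

theorem LaurentPolynomial.exists_C_mul_T_of_isUnit {R : Type*} [CommRing R] [IsDomain R]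
    {d : R[T;T⁻¹]} (hd : IsUnit d) : ∃ (a : R) (k : ℤ), IsUnit a ∧ d = C a * T k := by
  obtain ⟨e, hde⟩ := hd.exists_right_inv
  obtain ⟨n, f, hf⟩ := d.exists_T_pow
  obtain ⟨m, g, hg⟩ := e.exists_T_pow
  have hfg : f * g = Polynomial.X ^ (n + m) := by
    apply Polynomial.toLaurent_injective
    rw [map_mul, hf, hg, Polynomial.toLaurent_X_pow, Nat.cast_add, T_add]
    linear_combination (T n * T m) * hde
  obtain ⟨i, -, hi⟩ := (dvd_prime_pow Polynomial.prime_X _).1 (Dvd.intro g hfg)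
  obtain ⟨u, hu⟩ := hi.symm
  obtain ⟨c, hc, hcu⟩ := Polynomial.isUnit_iff.1 u.isUnit
  refine ⟨c, i - n, hc, ?_⟩
  calc d = Polynomial.toLaurent f * T (-n) := by
        rw [hf, mul_T_assoc, add_neg_cancel, T_zero, mul_one]
    _ = C c * T (i - n) := by
      rw [← hu, ← hcu, map_mul, Polynomial.toLaurent_X_pow, Polynomial.toLaurent_C, T_sub]
      ring

theorem Matrix.fin_two_mul_map_transpose_eq_one_iff {R : Type*} [CommRing R] (σ : R →+* R)
    (hσ : Function.Involutive σ) (a b c d : R) :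
    !![a, c; b, d] * (!![a, c; b, d].map σ)ᵀ = 1 ↔
      ∃ u, u * σ u = 1 ∧ c = -u * σ b ∧ d = u * σ a ∧ a * σ a + b * σ b = 1 := by
  have hstar : (!![a, c; b, d].map σ)ᵀ = !![σ a, σ b; σ c, σ d] := by
    ext i j; fin_cases i <;> fin_cases j <;> rfl
  constructor
  · intro h
    have h' := mul_eq_one_comm.1 h
    simp only [hstar, mul_fin_two, one_fin_two, EmbeddingLike.apply_eq_iff_eq, vecCons_inj,
      and_true] at h h'
    obtain ⟨⟨h₀₀, h₀₁⟩, h₁₀, h₁₁⟩ := h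
    refine ⟨a * d - c * b, ?_, ?_, ?_, by linear_combination h'.1.1⟩
    · simp only [map_sub, map_mul]
      linear_combination (b * σ b + d * σ d) * h₀₀ + h₁₁ - (b * σ a + d * σ c) * h₀₁
    · linear_combination d * h₀₁ - c * h₁₁
    · linear_combination c * h₁₀ - d * h₀₀
  · rintro ⟨u, hu, rfl, rfl, hnorm⟩
    simp only [hstar, mul_fin_two, one_fin_two, map_neg, map_mul, hσ _,
      EmbeddingLike.apply_eq_iff_eq, vecCons_inj, and_true]
    refine ⟨⟨?_, ?_⟩, ?_, ?_⟩
    · linear_combination hnorm + b * σ b * hu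
    · linear_combination -(a * σ b) * hu
    · linear_combination -(b * σ a) * hu
    · linear_combination hnorm + a * σ a * hu

def lstarRingHom : ℂ[T;T⁻¹] →+* ℂ[T;T⁻¹] :=
  invert.toRingHom.comp (AddMonoidAlgebra.mapRingHom ℤ (starRingEnd ℂ))

lemma lstarRingHom_C_mul_T (a : ℂ) (k : ℤ) :
    lstarRingHom (C a * T k) = C (starRingEnd ℂ a) * T (-k) := by
  rw [lstarRingHom, RingHom.comp_apply, ← single_eq_C_mul_T, AddMonoidAlgebra.mapRingHom_single,
    single_eq_C_mul_T]
  simp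

lemma coe_lstarRingHom : ⇑lstarRingHom = lstar := by
  funext p
  conv_lhs => rw [← AddMonoidAlgebra.sum_coeff_single p]
  rw [map_finsuppSum]
  exact Finsupp.sum_congr fun k _ => by rw [single_eq_C_mul_T, lstarRingHom_C_mul_T]

lemma involutive_lstarRingHom : Function.Involutive lstarRingHom := by
  intro p
  induction p using LaurentPolynomial.induction_on' with
  | add p q hp hq => rw [map_add, map_add, hp, hq]
  | C_mul_T k a => rw [lstarRingHom_C_mul_T, lstarRingHom_C_mul_T, Complex.conj_conj, neg_neg]

lemma C_mul_T_mul_lstarRingHom (a : ℂ) (k : ℤ) :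
    C a * T k * lstarRingHom (C a * T k) = C ((‖a‖ : ℂ) ^ 2) := by
  rw [lstarRingHom_C_mul_T, mul_mul_mul_comm, ← map_mul, ← T_add, add_neg_cancel, T_zero, mul_one,
    Complex.mul_conj']

lemma mul_lstarRingHom_eq_one_iff {u : ℂ[T;T⁻¹]} :
    u * lstarRingHom u = 1 ↔ ∃ (l : ℂ) (k : ℤ), ‖l‖ = 1 ∧ u = C l * T k := by
  have norm_eq_one_iff (a : ℂ) : C ((‖a‖ : ℂ) ^ 2) = 1 ↔ ‖a‖ = 1 := by
    rw [map_eq_one_iff _ (C (R := ℂ)).injective, ← Complex.ofReal_pow, Complex.ofReal_eq_one,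
      pow_eq_one_iff_of_nonneg (norm_nonneg a) two_ne_zero]
  constructor
  · intro hu
    obtain ⟨l, k, -, rfl⟩ := exists_C_mul_T_of_isUnit (IsUnit.of_mul_eq_one _ hu)
    exact ⟨l, k, (norm_eq_one_iff l).1 (C_mul_T_mul_lstarRingHom l k ▸ hu), rfl⟩
  · rintro ⟨l, k, hl, rfl⟩
    rw [C_mul_T_mul_lstarRingHom, norm_eq_one_iff, hl]

lemma leval_eq_eval₂ {z : ℂ} (hz : z ≠ 0) : leval z = eval₂ (RingHom.id ℂ) (Units.mk0 z hz) := by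
  funext p
  conv_rhs => rw [← AddMonoidAlgebra.sum_coeff_single p]
  rw [map_finsuppSum]
  refine Finsupp.sum_congr fun k _ => ?_
  simp [single_eq_C_mul_T, Units.val_zpow_eq_zpow_val]

lemma eq_of_forall_leval_eq {p q : ℂ[T;T⁻¹]} (h : ∀ z : ℂ, z ≠ 0 → leval z p = leval z q) :
    p = q := by
  obtain ⟨n, f, hf⟩ := (p - q).exists_T_pow
  have hfX : f * Polynomial.X = 0 := by
    refine Polynomial.funext fun z => ?_
    rcases eq_or_ne z 0 with rfl | hz
    · simp
    have hfz : f.eval z = 0 := by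
      have := congrArg (eval₂ (RingHom.id ℂ) (Units.mk0 z hz)) hf
      rwa [eval₂_toLaurent, Polynomial.eval₂_id, map_mul, map_sub, ← leval_eq_eval₂ hz,
        h z hz, sub_self, zero_mul] at this
    simp [hfz]
  have hf0 : f = 0 := (mul_eq_zero.1 hfX).resolve_right Polynomial.X_ne_zero
  rw [hf0, map_zero, eq_comm, (isUnit_T (n : ℤ)).mul_left_eq_zero, sub_eq_zero] at hf
  exact hf

lemma forall_leval_eq_one_iff (p : ℂ[T;T⁻¹]) : (∀ z : ℂ, z ≠ 0 → leval z p = 1) ↔ p = 1 := by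
  refine ⟨fun h => eq_of_forall_leval_eq fun z hz => ?_, fun hp z hz => ?_⟩
  · rw [h z hz, leval_eq_eval₂ hz, map_one]
  · rw [hp, leval_eq_eval₂ hz, map_one]

lemma meval_mul {z : ℂ} (hz : z ≠ 0) {m n k : ℕ} (M : Matrix (Fin m) (Fin n) ℂ[T;T⁻¹])
    (N : Matrix (Fin n) (Fin k) ℂ[T;T⁻¹]) : meval z (M * N) = meval z M * meval z N := by
  simp only [meval, leval_eq_eval₂ hz, Matrix.map_mul]

lemma meval_one {z : ℂ} (hz : z ≠ 0) {n : ℕ} :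
    meval z (1 : Matrix (Fin n) (Fin n) ℂ[T;T⁻¹]) = 1 := by
  simp only [meval, leval_eq_eval₂ hz]
  exact Matrix.map_one _ (map_zero _) (map_one _)

lemma forall_meval_mul_eq_one_iff {m n : ℕ} (M : Matrix (Fin m) (Fin n) ℂ[T;T⁻¹])
    (N : Matrix (Fin n) (Fin m) ℂ[T;T⁻¹]) :
    (∀ z : ℂ, z ≠ 0 → meval z M * meval z N = 1) ↔ M * N = 1 := by
  refine ⟨fun h => ?_, fun h z hz => by rw [← meval_mul hz, h, meval_one hz]⟩
  refine Matrix.ext fun i j => eq_of_forall_leval_eq fun z hz => ?_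
  have := congrFun₂ (h z hz) i j
  rwa [← meval_mul hz, ← meval_one hz] at this

theorem stmt13 (p₁ p₂ p₃ p₄ : LaurentPolynomial ℂ) :
    (∀ z : ℂ, z ≠ 0 →
        meval z !![p₁, p₃; p₂, p₄] * meval z (mstar !![p₁, p₃; p₂, p₄]) = 1) ↔
      ∃ (l : ℂ) (k : ℤ), ‖l‖ = 1 ∧
        p₃ = -(LaurentPolynomial.C l * LaurentPolynomial.T k) * lstar p₂ ∧
        p₄ = LaurentPolynomial.C l * LaurentPolynomial.T k * lstar p₁ ∧
        (∀ z : ℂ, z ≠ 0 → leval z (p₁ * lstar p₁ + p₂ * lstar p₂) = 1) := by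
  rw [forall_meval_mul_eq_one_iff, mstar, forall_leval_eq_one_iff, ← coe_lstarRingHom,
    fin_two_mul_map_transpose_eq_one_iff _ involutive_lstarRingHom]
  constructor
  · rintro ⟨u, hu, h₃, h₄, hnorm⟩
    obtain ⟨l, k, hl, rfl⟩ := mul_lstarRingHom_eq_one_iff.1 hu
    exact ⟨l, k, hl, h₃, h₄, hnorm⟩
  · rintro ⟨l, k, hl, h₃, h₄, hnorm⟩
    exact ⟨_, mul_lstarRingHom_eq_one_iff.2 ⟨l, k, hl, rfl⟩, h₃, h₄, hnorm⟩
end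
end
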